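/- Let Y be a nonnegative random variable and M > 0 a constant such that Y ≤ M·X_{(n)} almost surely, where X_{(n)} = max(X_1,…,X_n) of i.i.d. nonnegative random variables with P(X_i > x) ≤ K·x^{−α}. Then for any ε > 0, P(Y > y and Σ_{i=1}^n X_i − X_{(n)} ≥ ε·X_{(n)}) = O(y^{−2α}) as y → ∞. -/

import Mathlib

/-!
If `Y > y` then the maximum `X_{(n)}` exceeds `y / M`, and if moreover the remaining mass
`Σ X_i - X_{(n)}` is at least `ε X_{(n)}`, then by pigeonhole some other coordinate exceeds
`ε / n · y / M`. So the event forces two distinct coordinates to exceed thresholds linear in `y`;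
by independence each such pair has probability at most `K (y/M)^{-α} · K (ε y / (n M))^{-α}`, and
there are at most `n²` pairs.
-/

open MeasureTheory ProbabilityTheory Finset
open scoped ENNReal

section TwoLargeCoordinates

variable {ι : Type*} [Fintype ι]

lemma exists_eq_ciSup_of_pos {x : ι → ℝ} (h : 0 < ⨆ i, x i) : ∃ i, x i = ⨆ i, x i := by
  cases isEmpty_or_nonempty ι with
  | inl _ => simp [Real.iSup_of_isEmpty] at h
  | inr _ => exact exists_eq_ciSup_of_finite

lemma exists_ne_lt_of_card_mul_lt_sum_sub {x : ι → ℝ} {t : ℝ} (i : ι) (ht : 0 ≤ t)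
    (h : Fintype.card ι * t < ∑ j, x j - x i) : ∃ j ≠ i, t < x j := by
  classical
  have hlt : ∑ _j ∈ univ.erase i, t < ∑ j ∈ univ.erase i, x j := by
    rw [sum_const, card_erase_of_mem (mem_univ i), card_univ, nsmul_eq_mul,
      sum_erase_eq_sub (mem_univ i)]
    calc ((Fintype.card ι - 1 : ℕ) : ℝ) * t ≤ Fintype.card ι * t := by
          gcongr; exact Nat.sub_le _ _
      _ < _ := h
  obtain ⟨j, hj, htj⟩ := exists_lt_of_sum_lt hlt
  exact ⟨j, ne_of_mem_erase hj, htj⟩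

lemma exists_ne_lt_lt_of_mul_ciSup_le_sum_sub {x : ι → ℝ} {ε a : ℝ} (hε : 0 < ε) (ha : 0 < a)
    (hmax : a < ⨆ i, x i) (hsum : ε * ⨆ i, x i ≤ ∑ i, x i - ⨆ i, x i) :
    ∃ i j, i ≠ j ∧ a < x i ∧ ε / Fintype.card ι * a < x j := by
  obtain ⟨i, hi⟩ := exists_eq_ciSup_of_pos (ha.trans hmax)
  have hcard : (Fintype.card ι : ℝ) ≠ 0 := Nat.cast_ne_zero.2 (Fintype.card_pos_iff.2 ⟨i⟩).ne'
  have hrest : Fintype.card ι * (ε / Fintype.card ι * a) < ∑ j, x j - x i := by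
    calc Fintype.card ι * (ε / Fintype.card ι * a) = ε * a := by field_simp
      _ < ε * x i := by rw [hi]; gcongr
      _ ≤ ∑ j, x j - x i := by rw [hi]; exact hsum
  obtain ⟨j, hji, hj⟩ := exists_ne_lt_of_card_mul_lt_sum_sub i (by positivity) hrest
  exact ⟨i, j, hji.symm, hi ▸ hmax, hj⟩

lemma measure_exists_ne_lt_lt_le {Ω : Type*} [MeasurableSpace Ω] {μ : Measure Ω}
    {X : ι → Ω → ℝ} (hX : iIndepFun X μ) {a b : ℝ} {p q : ℝ≥0∞}
    (hp : ∀ i, μ {ω | a < X i ω} ≤ p) (hq : ∀ i, μ {ω | b < X i ω} ≤ q) :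
    μ {ω | ∃ i j, i ≠ j ∧ a < X i ω ∧ b < X j ω} ≤ Fintype.card ι ^ 2 * (p * q) := by
  have hpair : ∀ i j, μ {ω | i ≠ j ∧ a < X i ω ∧ b < X j ω} ≤ p * q := by
    intro i j
    by_cases hij : i = j
    · simp [hij]
    calc μ {ω | i ≠ j ∧ a < X i ω ∧ b < X j ω} = μ (X i ⁻¹' Set.Ioi a ∩ X j ⁻¹' Set.Ioi b) := by
          simp only [hij, ne_eq, not_false_eq_true, true_and]; rfl
      _ = μ (X i ⁻¹' Set.Ioi a) * μ (X j ⁻¹' Set.Ioi b) :=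
          (hX.indepFun hij).measure_inter_preimage_eq_mul _ _ measurableSet_Ioi measurableSet_Ioi
      _ ≤ p * q := mul_le_mul' (hp i) (hq j)
  calc μ {ω | ∃ i j, i ≠ j ∧ a < X i ω ∧ b < X j ω}
      = μ (⋃ i, ⋃ j, {ω | i ≠ j ∧ a < X i ω ∧ b < X j ω}) := by simp only [Set.ofPred_exists]
    _ ≤ ∑ i, ∑ j, μ {ω | i ≠ j ∧ a < X i ω ∧ b < X j ω} :=
        (measure_iUnion_fintype_le _ _).trans (sum_le_sum fun _ _ => measure_iUnion_fintype_le _ _)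
    _ ≤ ∑ _i : ι, ∑ _j : ι, p * q := by gcongr with i _ j _; exact hpair i j
    _ = Fintype.card ι ^ 2 * (p * q) := by simp [sq, mul_assoc]

end TwoLargeCoordinates

theorem catastrophe_principle_bound_general
    {Ω : Type*} [MeasurableSpace Ω] (μ : Measure Ω)
    (n : ℕ) (X : Fin n → Ω → ℝ) (K α : ℝ) (hK : 0 < K)
    (hindep : iIndepFun X μ)
    (htail : ∀ i, ∀ x : ℝ, 0 < x → μ {ω | X i ω > x} ≤ ENNReal.ofReal (K * x ^ (-α)))
    (Y : Ω → ℝ)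
    (M : ℝ) (hM : 0 < M)
    (hbound : ∀ ω, Y ω ≤ M * ⨆ i, X i ω)
    (ε : ℝ) (hε : 0 < ε) :
    ∃ C y₀ : ℝ, 0 ≤ C ∧ ∀ y ≥ y₀,
      μ {ω | Y ω > y ∧ (∑ i, X i ω) - (⨆ i, X i ω) ≥ ε * ⨆ i, X i ω} ≤
        ENNReal.ofReal (C * y ^ (-(2 * α))) := by
  set s := M⁻¹
  set t := ε / n * M⁻¹
  refine ⟨n ^ 2 * (K * s ^ (-α)) * (K * t ^ (-α)), 1, by positivity, fun y hy => ?_⟩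
  have hy : 0 < y := one_pos.trans_le hy
  have hty : ∀ i : Fin n, 0 < t * y := fun i =>
    mul_pos (mul_pos (div_pos hε (Nat.cast_pos.2 i.pos)) (inv_pos.2 hM)) hy
  have hevent : {ω | Y ω > y ∧ (∑ i, X i ω) - (⨆ i, X i ω) ≥ ε * ⨆ i, X i ω} ⊆
      {ω | ∃ i j, i ≠ j ∧ s * y < X i ω ∧ t * y < X j ω} := by
    rintro ω ⟨hY, hsum⟩
    have hmax : s * y < ⨆ i, X i ω := by
      rw [inv_mul_lt_iff₀ hM]; exact hY.trans_le (hbound ω)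
    simpa [t, mul_assoc] using exists_ne_lt_lt_of_mul_ciSup_le_sum_sub hε (by positivity) hmax hsum
  calc _ ≤ μ {ω | ∃ i j, i ≠ j ∧ s * y < X i ω ∧ t * y < X j ω} := measure_mono hevent
    _ ≤ (n : ℝ≥0∞) ^ 2 * (ENNReal.ofReal (K * (s * y) ^ (-α)) *
          ENNReal.ofReal (K * (t * y) ^ (-α))) := by
      simpa using measure_exists_ne_lt_lt_le hindep (fun i => htail i _ (by positivity))
        (fun i => htail i _ (hty i))
    _ = ENNReal.ofReal (n ^ 2 * (K * s ^ (-α)) * (K * t ^ (-α)) * y ^ (-(2 * α))) := by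
      rw [← ENNReal.ofReal_mul (by positivity), ← ENNReal.ofReal_natCast, ← ENNReal.ofReal_pow
        (by positivity), ← ENNReal.ofReal_mul (by positivity)]
      congr 1
      rw [Real.mul_rpow (by positivity) hy.le, Real.mul_rpow (by positivity) hy.le,
        show -(2 * α) = -α + -α by ring, Real.rpow_add hy]
      ring

/-- if Y ≤ M·X_{(n)} a.s. where X_{(n)} is the maximum of i.i.d. nonnegative
random variables with tail bound P(X_i > x) ≤ K x^{-α}, then for any ε > 0,
P(Y > y, Σ X_i − X_{(n)} ≥ ε X_{(n)}) = O(y^{-2α}) as y → ∞. -/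
theorem catastrophe_principle_bound
    {Ω : Type*} [MeasurableSpace Ω] (μ : Measure Ω) [IsProbabilityMeasure μ]
    (n : ℕ) (hn : 0 < n) (X : Fin n → Ω → ℝ) (K α : ℝ) (hK : 0 < K) (hα : 0 < α)
    (hmeas : ∀ i, Measurable (X i))
    (hnonneg : ∀ i ω, 0 ≤ X i ω)
    (hindep : iIndepFun X μ)
    (hident : ∀ i j, IdentDistrib (X i) (X j) μ μ)
    (htail : ∀ i, ∀ x : ℝ, 0 < x → μ {ω | X i ω > x} ≤ ENNReal.ofReal (K * x ^ (-α)))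
    (Y : Ω → ℝ) (hYmeas : Measurable Y) (hYnonneg : ∀ ω, 0 ≤ Y ω)
    (M : ℝ) (hM : 0 < M)
    (hbound : ∀ ω, Y ω ≤ M * ⨆ i, X i ω)
    (ε : ℝ) (hε : 0 < ε) :
    ∃ C y₀ : ℝ, 0 ≤ C ∧ ∀ y ≥ y₀,
      μ {ω | Y ω > y ∧ (∑ i, X i ω) - (⨆ i, X i ω) ≥ ε * ⨆ i, X i ω} ≤
        ENNReal.ofReal (C * y ^ (-(2 * α))) :=
  catastrophe_principle_bound_general μ n X K α hK hindep htail Y M hM hbound ε hε
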